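/- Let r > 0 and let P be the uniform distribution on the circle {(x₁,x₂) ∈ ℝ² : x₁² + x₂² = r²}, and let V_n(P) denote the n-th (unconstrained, unconditional) quantization error for P. Then the quantization coefficient for P exists as a finite positive number and equals π²r²/3, i.e., lim_{n→∞} n²·V_n(P) = π²r²/3. -/

import Mathlib

open MeasureTheory Set Filter

/-- The uniform distribution on the circle of radius `r` centered at the origin:
the pushforward of the normalized Lebesgue measure on `[0, 2π)` under
`θ ↦ (r cos θ, r sin θ)`. -/
noncomputable def uniformCircle (r : ℝ) : Measure (ℝ × ℝ) :=
  Measure.map (fun θ : ℝ => (r * Real.cos θ, r * Real.sin θ))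
    ((ENNReal.ofReal (2 * Real.pi))⁻¹ • volume.restrict (Set.Ico 0 (2 * Real.pi)))

/-- The squared Euclidean distance on `ℝ²`. -/
noncomputable def sqDist (p q : ℝ × ℝ) : ℝ := (p.1 - q.1) ^ 2 + (p.2 - q.2) ^ 2

/-- The distortion error of a set `s` of points for the measure `P` on `ℝ²`. -/
noncomputable def distortion2 (P : Measure (ℝ × ℝ)) (s : Set (ℝ × ℝ)) : ℝ :=
  ∫ x, sInf (sqDist x '' s) ∂P

/-- The `n`-th (unconstrained, unconditional) quantization error for `P` on `ℝ²`. -/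
noncomputable def quantError2 (P : Measure (ℝ × ℝ)) (n : ℕ) : ℝ :=
  sInf { v : ℝ | ∃ α : Set (ℝ × ℝ),
    α.Nonempty ∧ α.Finite ∧ α.ncard ≤ n ∧ v = distortion2 P α }

/-!
The `n` points at angles `(2k+1)π/n` show `V_n ≤ (2r²/π) · n (π/n - sin (π/n))`.

Conversely, a point at angular distance `δ` from `(r cos θ, r sin θ)` is at squared distance at
least `r² sin² (min δ (π/2))` from it. If `M θ` is the distance from `θ` to the polar angles of
the `n` codepoints, then `{M ≤ t}` has measure at most `2nt`, and the layer-cake formula turns this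
tail bound into `V_n ≥ (r²/4π) · n (2π/n - sin (2π/n))`.

Both bounds are `2π²r² (x - sin x) / (n² x³)` with `x = π/n`, resp. `x = 2π/n`, and
`(x - sin x) / x³ → 1/6`.
-/

open Real

lemma tendsto_natCast_pow_three_mul_sub_sin (c : ℝ) :
    Tendsto (fun n : ℕ => (n : ℝ) ^ 3 * (c / n - sin (c / n))) atTop (nhds (c ^ 3 / 6)) := by
  have hbound : ∀ᶠ n : ℕ in atTop,
      |(n : ℝ) ^ 3 * (c / n - sin (c / n)) - c ^ 3 / 6| ≤
        |c| ^ 5 / 100 * (1 / (n : ℝ)) ^ 2 := by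
    filter_upwards [eventually_ge_atTop (⌈|c|⌉₊ + 1)] with n hn
    have hn0 : (0 : ℝ) < n := by exact_mod_cast (Nat.succ_pos _).trans_le hn
    have hcn : |c / n| ≤ 1 := by
      rw [abs_div, Nat.abs_cast, div_le_one hn0]
      exact (Nat.le_ceil _).trans (by exact_mod_cast (Nat.le_succ _).trans hn)
    have key : (n : ℝ) ^ 3 * (c / n - sin (c / n)) - c ^ 3 / 6 =
        -((n : ℝ) ^ 3 * (sin (c / n) - (c / n - (c / n) ^ 3 / 6))) := by
      field_simp; ring
    rw [key, abs_neg, abs_mul, abs_of_pos (by positivity)]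
    calc (n : ℝ) ^ 3 * |sin (c / n) - (c / n - (c / n) ^ 3 / 6)|
        ≤ (n : ℝ) ^ 3 * (|c / n| ^ 5 / 100) := by gcongr; exact sin_bound hcn
      _ = |c| ^ 5 / 100 * (1 / (n : ℝ)) ^ 2 := by
        rw [abs_div, Nat.abs_cast]; field_simp
  have hlim : Tendsto (fun n : ℕ => |c| ^ 5 / 100 * (1 / (n : ℝ)) ^ 2) atTop (nhds 0) := by
    have := (tendsto_one_div_atTop_nhds_zero_nat.pow 2).const_mul (|c| ^ 5 / 100)
    rwa [zero_pow two_ne_zero, mul_zero] at this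
  exact tendsto_sub_nhds_zero_iff.1 (squeeze_zero_norm' hbound hlim)

lemma intervalIntegral_mul_le_integral_of_le_measure_lt {α : Type*} [MeasurableSpace α]
    {μ : Measure α} {f : α → ℝ} (hf0 : 0 ≤ᵐ[μ] f) (hf : AEMeasurable f μ) {g m : ℝ → ℝ}
    (hg : ∀ t > 0, IntervalIntegrable g volume 0 t) (hg0 : ∀ t, 0 ≤ t → 0 ≤ g t)
    (hG : Integrable (fun x => ∫ t in 0..f x, g t) μ) {b : ℝ} (hb : 0 ≤ b)
    (hmg : IntervalIntegrable (fun t => m t * g t) volume 0 b) (hm0 : ∀ t ∈ Ioc 0 b, 0 ≤ m t)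
    (hm : ∀ t ∈ Ioc 0 b, ENNReal.ofReal (m t) ≤ μ {x | t < f x}) :
    ∫ t in 0..b, m t * g t ≤ ∫ x, (∫ t in 0..f x, g t) ∂μ := by
  have hG0 : 0 ≤ᵐ[μ] fun x => ∫ t in 0..f x, g t := by
    filter_upwards [hf0] with x hx
    exact intervalIntegral.integral_nonneg hx fun t ht => hg0 t ht.1
  rw [← ENNReal.ofReal_le_ofReal_iff (integral_nonneg_of_ae hG0),
    intervalIntegral.integral_of_le hb,
    ofReal_integral_eq_lintegral_ofReal hmg.1 (ae_restrict_of_forall_mem measurableSet_Ioc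
      fun t ht => mul_nonneg (hm0 t ht) (hg0 t ht.1.le)),
    ofReal_integral_eq_lintegral_ofReal hG hG0,
    lintegral_comp_eq_lintegral_meas_lt_mul μ hf0 hf hg
      (ae_restrict_of_forall_mem measurableSet_Ioi fun t ht => hg0 t (le_of_lt ht))]
  calc ∫⁻ t in Ioc 0 b, ENNReal.ofReal (m t * g t)
      ≤ ∫⁻ t in Ioc 0 b, μ {x | t < f x} * ENNReal.ofReal (g t) :=
        setLIntegral_mono' measurableSet_Ioc fun t ht => by
          rw [ENNReal.ofReal_mul (hm0 t ht)]
          exact mul_le_mul_left (hm t ht) _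
    _ ≤ ∫⁻ t in Ioi 0, μ {x | t < f x} * ENNReal.ofReal (g t) :=
        lintegral_mono_set Ioc_subset_Ioi_self

lemma volume_restrict_Ioc_dist_coe_le {T : ℝ} [Fact (0 < T)] (a : ℝ) (x : AddCircle T) (t : ℝ) :
    volume.restrict (Ioc a (a + T)) {θ : ℝ | dist (θ : AddCircle T) x ≤ t} ≤
      ENNReal.ofReal (2 * t) := by
  rw [show {θ : ℝ | dist (θ : AddCircle T) x ≤ t} = (↑) ⁻¹' Metric.closedBall x t from rfl,
    (AddCircle.measurePreserving_mk T a).measure_preimage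
    measurableSet_closedBall.nullMeasurableSet, AddCircle.volume_closedBall]
  exact ENNReal.ofReal_le_ofReal (min_le_right _ _)

lemma le_volume_restrict_Ioc_lt_infDist {T : ℝ} [Fact (0 < T)] (a : ℝ) {S : Set (AddCircle T)}
    (hS : S.Finite) (hne : S.Nonempty) {t : ℝ} (ht : 0 ≤ t) :
    ENNReal.ofReal (T - 2 * S.ncard * t) ≤
      volume.restrict (Ioc a (a + T)) {θ : ℝ | t < Metric.infDist (θ : AddCircle T) S} := by
  set μ := volume.restrict (Ioc a (a + T))
  have hle :
      μ {θ : ℝ | Metric.infDist (θ : AddCircle T) S ≤ t} ≤ S.ncard * ENNReal.ofReal (2 * t) :=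
    calc μ {θ : ℝ | Metric.infDist (θ : AddCircle T) S ≤ t}
        ≤ μ (⋃ s ∈ hS.toFinset, {θ : ℝ | dist (θ : AddCircle T) s ≤ t}) := by
          refine measure_mono fun θ hθ => ?_
          obtain ⟨s, hs, hθs⟩ := hS.isCompact.exists_infDist_eq_dist hne θ
          exact mem_biUnion (hS.mem_toFinset.2 hs)
            (show dist _ _ ≤ t by rw [← hθs]; exact hθ)
      _ ≤ ∑ s ∈ hS.toFinset, μ {θ : ℝ | dist (θ : AddCircle T) s ≤ t} :=
          measure_biUnion_finset_le _ _
      _ ≤ ∑ _s ∈ hS.toFinset, ENNReal.ofReal (2 * t) :=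
          Finset.sum_le_sum fun s _ => volume_restrict_Ioc_dist_coe_le a s t
      _ = S.ncard * ENNReal.ofReal (2 * t) := by
          rw [Finset.sum_const, nsmul_eq_mul, ncard_eq_toFinset_card S hS]
  have huniv : μ univ = ENNReal.ofReal T := by
    rw [Measure.restrict_apply_univ, Real.volume_Ioc, add_sub_cancel_left]
  calc ENNReal.ofReal (T - 2 * S.ncard * t)
      = μ univ - S.ncard * ENNReal.ofReal (2 * t) := by
        rw [ENNReal.ofReal_sub _ (by positivity), huniv, ← ENNReal.ofReal_natCast,
          ← ENNReal.ofReal_mul (by positivity)]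
        ring_nf
    _ ≤ μ univ - μ {θ : ℝ | Metric.infDist (θ : AddCircle T) S ≤ t} :=
        tsub_le_tsub_left hle _
    _ ≤ μ {θ : ℝ | t < Metric.infDist (θ : AddCircle T) S} := by
        refine tsub_le_iff_right.2 <| (measure_mono fun θ _ => ?_).trans (measure_union_le _ _)
        exact lt_or_ge t _

noncomputable def sinSqClamp (x : ℝ) : ℝ := sin (min x (π / 2)) ^ 2

lemma monotoneOn_sinSqClamp : MonotoneOn sinSqClamp (Ici 0) := by
  intro x hx y _ hxy
  have h0 : 0 ≤ min x (π / 2) := le_min hx (by positivity)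
  have hmin : min x (π / 2) ≤ min y (π / 2) := min_le_min_right _ hxy
  exact pow_le_pow_left₀
    (sin_nonneg_of_nonneg_of_le_pi h0 (by linarith [min_le_right x (π / 2)]))
    (sin_le_sin_of_le_of_le_pi_div_two (by linarith [pi_pos]) (min_le_right _ _) hmin) 2

lemma sq_mul_sinSqClamp_le {r s δ : ℝ} (hr : 0 ≤ r) (hs : 0 ≤ s) (hδ : δ ≤ π) :
    r ^ 2 * sinSqClamp δ ≤ r ^ 2 + s ^ 2 - 2 * r * s * cos δ := by
  unfold sinSqClamp
  rcases le_or_gt δ (π / 2) with hδ2 | hδ2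
  · rw [min_eq_left hδ2]
    nlinarith [sq_nonneg (r * cos δ - s), sin_sq_add_cos_sq δ]
  · rw [min_eq_right hδ2.le, sin_pi_div_two, one_pow]
    nlinarith [mul_nonneg hr hs,
      cos_nonpos_of_pi_div_two_le_of_le hδ2.le (by linarith : δ ≤ π + π / 2)]

lemma integral_sin_two_mul_min (x : ℝ) (hx : 0 ≤ x) :
    ∫ t in 0..x, sin (2 * min t (π / 2)) = sinSqClamp x := by
  have hsq : ∀ y ≤ π / 2, 0 ≤ y → ∫ t in 0..y, sin (2 * min t (π / 2)) = sin y ^ 2 := by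
    intro y hy hy0
    rw [intervalIntegral.integral_congr (g := fun t => sin (2 * t)) fun t ht => by
        rw [uIcc_of_le hy0] at ht
        simp only [min_eq_left (ht.2.trans hy)],
      intervalIntegral.integral_comp_mul_left (fun t => sin t) two_ne_zero, integral_sin,
      mul_zero, cos_zero, cos_two_mul, cos_sq']
    ring
  unfold sinSqClamp
  rcases le_or_gt x (π / 2) with hx2 | hx2
  · rw [min_eq_left hx2, hsq x hx2 hx]
  · rw [min_eq_right hx2.le, ← intervalIntegral.integral_add_adjacent_intervals
      (b := π / 2) (by apply Continuous.intervalIntegrable; fun_prop)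
      (by apply Continuous.intervalIntegrable; fun_prop),
      hsq _ le_rfl (by positivity),
      intervalIntegral.integral_congr (g := fun _ => 0) fun t ht => by
        rw [uIcc_of_le hx2.le] at ht
        simp only [min_eq_right ht.1, mul_div_cancel₀ π two_ne_zero, sin_pi]]
    simp

lemma integral_two_pi_sub_mul_sin_two_mul_min {n : ℝ} (hn : 2 ≤ n) :
    ∫ t in 0..π / n, (2 * π - 2 * n * t) * sin (2 * min t (π / 2)) =
      n / 2 * (2 * π / n - sin (2 * π / n)) := by
  have hn0 : 0 < n := by linarith
  have hπn : π / n ≤ π / 2 := div_le_div_of_nonneg_left pi_pos.le two_pos hn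
  have hF : ∀ t, HasDerivAt (fun t => -(π - n * t) * cos (2 * t) - n / 2 * sin (2 * t))
      ((2 * π - 2 * n * t) * sin (2 * t)) t := by
    intro t
    have h2 : HasDerivAt (fun t : ℝ => 2 * t) 2 t := by
      simpa using (hasDerivAt_id t).const_mul (2 : ℝ)
    exact (((((hasDerivAt_id t).const_mul n).const_sub π).neg.mul
      ((hasDerivAt_cos _).comp t h2)).sub (((hasDerivAt_sin _).comp t h2).const_mul (n / 2))
      ).congr_deriv (by simp only [id, Function.comp, Pi.neg_apply]; ring)
  rw [intervalIntegral.integral_congr (g := fun t => (2 * π - 2 * n * t) * sin (2 * t))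
      fun t ht => by
        rw [uIcc_of_le (by positivity)] at ht
        simp only [min_eq_left (ht.2.trans hπn)],
    intervalIntegral.integral_eq_sub_of_hasDerivAt (fun t _ => hF t)
      (by apply Continuous.intervalIntegrable; fun_prop)]
  rw [mul_div_cancel₀ π hn0.ne', mul_div_assoc']
  simp only [sub_self, neg_zero, zero_mul, mul_zero, cos_zero, sin_zero, sub_zero]
  field_simp
  ring

lemma sqDist_nonneg (p q : ℝ × ℝ) : 0 ≤ sqDist p q := by
  unfold sqDist; positivity

lemma sInf_sqDist_image_le {x a : ℝ × ℝ} {α : Set (ℝ × ℝ)} (ha : a ∈ α) :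
    sInf (sqDist x '' α) ≤ sqDist x a :=
  csInf_le ⟨0, by rintro _ ⟨b, -, rfl⟩; exact sqDist_nonneg x b⟩ ⟨a, ha, rfl⟩

lemma continuous_sInf_sqDist_image {α : Set (ℝ × ℝ)} (hfin : α.Finite) (hne : α.Nonempty) :
    Continuous fun x => sInf (sqDist x '' α) := by
  have hne' : hfin.toFinset.Nonempty := by simpa using hne
  have h x : sInf (sqDist x '' α) = hfin.toFinset.inf' hne' (sqDist x) := by
    rw [Finset.inf'_eq_csInf_image, hfin.coe_toFinset]
  simp only [h]
  exact Continuous.finset_inf'_apply hne' fun a _ => by unfold sqDist; fun_prop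

lemma distortion2_nonneg (P : Measure (ℝ × ℝ)) (α : Set (ℝ × ℝ)) : 0 ≤ distortion2 P α :=
  integral_nonneg fun x => Real.sInf_nonneg <| by rintro _ ⟨b, -, rfl⟩; exact sqDist_nonneg x b

lemma quantError2_le_distortion2 (P : Measure (ℝ × ℝ)) {n : ℕ} {α : Set (ℝ × ℝ)}
    (hne : α.Nonempty) (hfin : α.Finite) (hcard : α.ncard ≤ n) :
    quantError2 P n ≤ distortion2 P α :=
  csInf_le ⟨0, by rintro _ ⟨β, -, -, -, rfl⟩; exact distortion2_nonneg P β⟩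
    ⟨α, hne, hfin, hcard, rfl⟩

lemma le_quantError2 (P : Measure (ℝ × ℝ)) {n : ℕ} (hn : 1 ≤ n) {b : ℝ}
    (h : ∀ α : Set (ℝ × ℝ), α.Nonempty → α.Finite → α.ncard ≤ n → b ≤ distortion2 P α) :
    b ≤ quantError2 P n :=
  le_csInf ⟨_, {0}, singleton_nonempty _, finite_singleton _, by simpa using hn, rfl⟩ <| by
    rintro _ ⟨α, hne, hfin, hcard, rfl⟩
    exact h α hne hfin hcard

noncomputable def circlePoint (r θ : ℝ) : ℝ × ℝ := (r * cos θ, r * sin θ)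

lemma continuous_sInf_sqDist_circlePoint_image (r : ℝ) {α : Set (ℝ × ℝ)} (hfin : α.Finite)
    (hne : α.Nonempty) : Continuous fun θ => sInf (sqDist (circlePoint r θ) '' α) :=
  (continuous_sInf_sqDist_image hfin hne).comp (by unfold circlePoint; fun_prop)

lemma distortion2_uniformCircle (r : ℝ) {α : Set (ℝ × ℝ)} (hfin : α.Finite) (hne : α.Nonempty) :
    distortion2 (uniformCircle r) α =
      (2 * π)⁻¹ * ∫ θ in 0..2 * π, sInf (sqDist (circlePoint r θ) '' α) := by
  unfold distortion2 uniformCircle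
  rw [integral_map (by fun_prop) (continuous_sInf_sqDist_image hfin hne).aestronglyMeasurable,
    integral_smul_measure, intervalIntegral.integral_of_le two_pi_pos.le,
    ← integral_Ico_eq_integral_Ioc, ENNReal.toReal_inv, ENNReal.toReal_ofReal two_pi_pos.le,
    smul_eq_mul]
  rfl

lemma sqDist_circlePoint (r θ φ : ℝ) :
    sqDist (circlePoint r θ) (circlePoint r φ) = 2 * r ^ 2 * (1 - cos (θ - φ)) := by
  unfold sqDist circlePoint
  rw [cos_sub]
  linear_combination r ^ 2 * (sin_sq_add_cos_sq θ + sin_sq_add_cos_sq φ)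

lemma integral_sqDist_circlePoint (r φ h : ℝ) :
    ∫ θ in (φ - h)..(φ + h), sqDist (circlePoint r θ) (circlePoint r φ) =
      4 * r ^ 2 * (h - sin h) := by
  simp only [sqDist_circlePoint]
  rw [intervalIntegral.integral_const_mul, intervalIntegral.integral_sub intervalIntegrable_const
    ((by fun_prop : Continuous fun θ => cos (θ - φ)).intervalIntegrable _ _),
    intervalIntegral.integral_comp_sub_right (fun x => cos x), integral_cos]
  simp only [intervalIntegral.integral_const, smul_eq_mul, add_sub_cancel_left,
    sub_sub_cancel_left, sin_neg]
  ring

lemma integral_sInf_sqDist_le_of_circlePoint_mem {r c h : ℝ} (hh : 0 ≤ h) {α : Set (ℝ × ℝ)}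
    (hfin : α.Finite) (hc : circlePoint r c ∈ α) :
    ∫ θ in (c - h)..(c + h), sInf (sqDist (circlePoint r θ) '' α) ≤ 4 * r ^ 2 * (h - sin h) := by
  rw [← integral_sqDist_circlePoint r c h]
  refine intervalIntegral.integral_mono_on (by linarith)
    ((continuous_sInf_sqDist_circlePoint_image r hfin ⟨_, hc⟩).intervalIntegrable _ _)
    ((by unfold sqDist circlePoint; fun_prop : Continuous fun θ =>
      sqDist (circlePoint r θ) (circlePoint r c)).intervalIntegrable _ _)
    fun θ _ => sInf_sqDist_image_le hc

lemma quantError2_uniformCircle_le (r : ℝ) {n : ℕ} (hn : 1 ≤ n) :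
    quantError2 (uniformCircle r) n ≤ 2 * r ^ 2 / π * (n * (π / n - sin (π / n))) := by
  have hn0 : (n : ℝ) ≠ 0 := by positivity
  set h := π / n
  set α : Finset (ℝ × ℝ) := (Finset.range n).image fun k : ℕ => circlePoint r ((2 * k + 1) * h)
  have hne : (α : Set (ℝ × ℝ)).Nonempty := by simpa [α] using Nat.pos_iff_ne_zero.1 hn
  have hcard : (α : Set (ℝ × ℝ)).ncard ≤ n := by
    rw [ncard_coe_finset]; exact Finset.card_image_le.trans (by simp)
  set F := fun θ => sInf (sqDist (circlePoint r θ) '' (α : Set (ℝ × ℝ)))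
  have harc k (hk : k < n) :
      ∫ θ in (2 * k * h)..(2 * (k + 1 : ℕ) * h), F θ ≤ 4 * r ^ 2 * (h - sin h) := by
    rw [show 2 * k * h = (2 * k + 1) * h - h by ring,
      show 2 * (k + 1 : ℕ) * h = (2 * k + 1) * h + h by push_cast; ring]
    refine integral_sInf_sqDist_le_of_circlePoint_mem (by positivity) α.finite_toSet ?_
    simp only [α, Finset.coe_image, Finset.coe_range]
    exact ⟨k, hk, rfl⟩
  have hsplit := intervalIntegral.sum_integral_adjacent_intervals (a := fun k : ℕ => 2 * k * h)
    (μ := volume) (n := n) fun k _ =>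
      (continuous_sInf_sqDist_circlePoint_image r α.finite_toSet hne).intervalIntegrable _ _
  rw [Nat.cast_zero, mul_zero, zero_mul,
    show 2 * (n : ℝ) * h = 2 * π by simp only [h]; field_simp] at hsplit
  calc quantError2 (uniformCircle r) n
      ≤ (2 * π)⁻¹ * ∫ θ in 0..2 * π, F θ :=
        (quantError2_le_distortion2 _ hne α.finite_toSet hcard).trans_eq
          (distortion2_uniformCircle r α.finite_toSet hne)
    _ ≤ (2 * π)⁻¹ * ∑ _k ∈ Finset.range n, 4 * r ^ 2 * (h - sin h) := by
        rw [← hsplit]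
        gcongr with k hk
        exact harc k (Finset.mem_range.1 hk)
    _ = 2 * r ^ 2 / π * (n * (h - sin h)) := by
        rw [Finset.sum_const, Finset.card_range, nsmul_eq_mul]
        field_simp
        ring

instance fact_zero_lt_two_pi : Fact (0 < 2 * π) := ⟨two_pi_pos⟩

lemma cos_norm_coe_addCircle (x : ℝ) : cos ‖(x : AddCircle (2 * π))‖ = cos x := by
  rw [AddCircle.norm_eq, cos_abs, cos_sub_int_mul_two_pi]

lemma sqDist_circlePoint_complex (r θ : ℝ) (z : ℂ) :
    sqDist (circlePoint r θ) (z.re, z.im) =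
      r ^ 2 + ‖z‖ ^ 2 - 2 * r * ‖z‖ * cos (θ - z.arg) := by
  unfold sqDist circlePoint
  rw [cos_sub, Complex.sq_norm, Complex.normSq_apply]
  linear_combination 2 * r * cos θ * Complex.norm_mul_cos_arg z
    + 2 * r * sin θ * Complex.norm_mul_sin_arg z + r ^ 2 * sin_sq_add_cos_sq θ

noncomputable def polarAngle (a : ℝ × ℝ) : AddCircle (2 * π) := ((⟨a.1, a.2⟩ : ℂ).arg : ℝ)

lemma sq_mul_sinSqClamp_dist_le {r : ℝ} (hr : 0 ≤ r) (θ : ℝ) (a : ℝ × ℝ) :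
    r ^ 2 * sinSqClamp (dist (θ : AddCircle (2 * π)) (polarAngle a)) ≤
      sqDist (circlePoint r θ) a := by
  have h := sqDist_circlePoint_complex r θ ⟨a.1, a.2⟩
  rw [← cos_norm_coe_addCircle, AddCircle.coe_sub] at h
  rw [dist_eq_norm, polarAngle, h]
  refine sq_mul_sinSqClamp_le hr (norm_nonneg _) ?_
  exact (AddCircle.norm_le_half_period _ two_pi_pos.ne').trans_eq
    (by rw [abs_of_pos two_pi_pos]; ring)

lemma sq_mul_sinSqClamp_infDist_le {r : ℝ} (hr : 0 ≤ r) {α : Set (ℝ × ℝ)} (hne : α.Nonempty)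
    (θ : ℝ) :
    r ^ 2 * sinSqClamp (Metric.infDist (θ : AddCircle (2 * π)) (polarAngle '' α)) ≤
      sInf (sqDist (circlePoint r θ) '' α) := by
  refine le_csInf (hne.image _) ?_
  rintro _ ⟨a, ha, rfl⟩
  refine (mul_le_mul_of_nonneg_left ?_ (sq_nonneg r)).trans (sq_mul_sinSqClamp_dist_le hr θ a)
  exact monotoneOn_sinSqClamp Metric.infDist_nonneg dist_nonneg
    (Metric.infDist_le_dist_of_mem (mem_image_of_mem _ ha))

lemma le_distortion2_uniformCircle {r : ℝ} (hr : 0 ≤ r) {n : ℕ} (hn : 2 ≤ n)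
    {α : Set (ℝ × ℝ)} (hne : α.Nonempty) (hfin : α.Finite) (hcard : α.ncard ≤ n) :
    r ^ 2 / (4 * π) * (n * (2 * π / n - sin (2 * π / n))) ≤ distortion2 (uniformCircle r) α := by
  have hn0 : (0 : ℝ) < n := by positivity
  set M := fun θ : ℝ => Metric.infDist (θ : AddCircle (2 * π)) (polarAngle '' α)
  have hM : Continuous M := (Metric.continuous_infDist_pt _).comp (AddCircle.continuous_mk' _)
  have hM0 θ : 0 ≤ M θ := Metric.infDist_nonneg
  have hGM : (fun θ => ∫ t in 0..M θ, sin (2 * min t (π / 2))) = fun θ => sinSqClamp (M θ) :=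
    funext fun θ => integral_sin_two_mul_min _ (hM0 θ)
  have hclamp : Continuous sinSqClamp := by unfold sinSqClamp; fun_prop
  have hcardS : ((polarAngle '' α).ncard : ℝ) ≤ n := by
    exact_mod_cast (ncard_image_le hfin).trans hcard
  have hlayer := intervalIntegral_mul_le_integral_of_le_measure_lt
    (μ := volume.restrict (Ioc 0 (2 * π))) (f := M) (g := fun t => sin (2 * min t (π / 2)))
    (m := fun t => 2 * π - 2 * n * t) (b := π / n) (ae_of_all _ hM0) hM.aemeasurable
    (fun t _ => by apply Continuous.intervalIntegrable; fun_prop)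
    (fun t ht => sin_nonneg_of_nonneg_of_le_pi (by positivity)
      (by linarith [min_le_right t (π / 2)]))
    (by rw [hGM]; exact (hclamp.comp hM).integrableOn_Ioc) (by positivity)
    (by apply Continuous.intervalIntegrable; fun_prop)
    (fun t ht => by have := ht.2; rw [le_div_iff₀ hn0] at this; linarith)
    (fun t ht => by
      refine (ENNReal.ofReal_le_ofReal ?_).trans (by
        simpa only [zero_add] using le_volume_restrict_Ioc_lt_infDist 0 (hfin.image polarAngle)
          (hne.image polarAngle) ht.1.le)
      nlinarith [ht.1])
  rw [hGM, integral_two_pi_sub_mul_sin_two_mul_min (by exact_mod_cast hn)] at hlayer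
  calc r ^ 2 / (4 * π) * (n * (2 * π / n - sin (2 * π / n)))
      = (2 * π)⁻¹ * (r ^ 2 * (n / 2 * (2 * π / n - sin (2 * π / n)))) := by
        field_simp; ring
    _ ≤ (2 * π)⁻¹ * ∫ θ in Ioc 0 (2 * π), r ^ 2 * sinSqClamp (M θ) := by
        rw [integral_const_mul]; gcongr
    _ ≤ (2 * π)⁻¹ * ∫ θ in 0..2 * π, sInf (sqDist (circlePoint r θ) '' α) := by
        rw [intervalIntegral.integral_of_le two_pi_pos.le]
        refine mul_le_mul_of_nonneg_left (integral_mono ?_ ?_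
          (sq_mul_sinSqClamp_infDist_le hr hne)) (by positivity)
        · exact (continuous_const.mul (hclamp.comp hM)).integrableOn_Ioc
        · exact (continuous_sInf_sqDist_circlePoint_image r hfin hne).integrableOn_Ioc
    _ = distortion2 (uniformCircle r) α := (distortion2_uniformCircle r hfin hne).symm

theorem stmt11 (r : ℝ) (hr : 0 < r) :
    Tendsto (fun n : ℕ => (n : ℝ) ^ 2 * quantError2 (uniformCircle r) n) atTop
      (nhds (Real.pi ^ 2 * r ^ 2 / 3)) := by
  have hlower := (tendsto_natCast_pow_three_mul_sub_sin (2 * π)).const_mul (r ^ 2 / (4 * π))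
  have hupper := (tendsto_natCast_pow_three_mul_sub_sin π).const_mul (2 * r ^ 2 / π)
  rw [show r ^ 2 / (4 * π) * ((2 * π) ^ 3 / 6) = π ^ 2 * r ^ 2 / 3 by field_simp; ring] at hlower
  rw [show 2 * r ^ 2 / π * (π ^ 3 / 6) = π ^ 2 * r ^ 2 / 3 by field_simp; ring] at hupper
  refine tendsto_of_tendsto_of_tendsto_of_le_of_le' hlower hupper ?_ ?_
  · filter_upwards [eventually_ge_atTop 2] with n hn
    have := le_quantError2 (uniformCircle r) (by omega) fun α hne hfin hcard =>
      le_distortion2_uniformCircle hr.le hn hne hfin hcard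
    exact (le_of_eq (by ring)).trans (mul_le_mul_of_nonneg_left this (sq_nonneg _))
  · filter_upwards [eventually_ge_atTop 1] with n hn
    exact (mul_le_mul_of_nonneg_left (quantError2_uniformCircle_le r hn) (sq_nonneg _)).trans
      (le_of_eq (by ring))
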